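/- For k ≥ r ≥ 3 and p,t ≥ 0, assume π is a partition in C_=(k,r|p,t) with π^{(2)}_{p+1} = 2t+2, and let s be the smallest integer such that π^{(2)}_s = π^{(2)}_{p+1} + 4(p−s+1) with starting type s₀ or s₁. Then: (1) π^{(2)}_s + 2 does not occur in π; (2) for every i < s, if π^{(2)}_i = π^{(2)}_{p+1} + 4(p−i+1) then π^{(2)}_i is of starting type s₃. -/

import Mathlib

namespace Bressoud

/-- A partition: a weakly decreasing list of positive integers. -/
structure Partition where
  parts : List ℕ
  pos : ∀ x ∈ parts, 0 < x
  sorted : parts.Pairwise (· ≥ ·)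

namespace Partition

/-- `|π|`, the sum of the parts of `π`. -/
def size (π : Partition) : ℕ := π.parts.sum

/-- `ℓ(π)`, the number of parts of `π`. -/
def numParts (π : Partition) : ℕ := π.parts.length

end Partition

lemma exists_pos_not_mem (s : List ℕ) : ∃ n, 0 < n ∧ n ∉ s := by
  refine ⟨s.sum + 1, Nat.succ_pos _, fun h => ?_⟩
  have := List.single_le_sum (l := s) (fun x _ => Nat.zero_le x) _ h
  omega

/-- The least positive integer not occurring in `s`. -/
def mex1 (s : List ℕ) : ℕ := Nat.find (exists_pos_not_mem s)

/-- Parts `p ≥ q` conflict (must receive different marks) when `p - q ≤ 2`,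
with strict inequality when `p` is odd. -/
def conflict (p q : ℕ) : Bool :=
  if p % 2 = 1 then decide (p - q < 2) else decide (p - q ≤ 2)

/-- Greedy computation of the Göllnitz–Gordon marking: the parts are processed
from smallest to largest (second argument: remaining parts in increasing
order; first argument: already processed parts with their marks), and each
part receives the least positive mark different from the marks of all already
processed conflicting parts. -/
def ggAux : List (ℕ × ℕ) → List ℕ → List (ℕ × ℕ)
  | acc, [] => acc
  | acc, p :: rest =>
      ggAux ((p, mex1 ((acc.filter fun q => conflict p q.1).map Prod.snd)) :: acc) rest

/-- The Göllnitz–Gordon marking `GG(π)` of `π`, as a list of (part, mark)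
pairs in decreasing order of parts. -/
def ggMarks (π : Partition) : List (ℕ × ℕ) := ggAux [] π.parts.reverse

/-- There is an `m`-marked part equal to `x` in `GG(π)`. -/
def Marked (π : Partition) (x m : ℕ) : Prop := (x, m) ∈ ggMarks π

instance (π : Partition) (x m : ℕ) : Decidable (Marked π x m) := by
  unfold Marked; infer_instance

/-- The `i`-th row of `GG(π)`: the `i`-marked parts, in decreasing order. -/
def row (π : Partition) (i : ℕ) : List ℕ :=
  ((ggMarks π).filter fun q => q.2 == i).map Prod.fst

/-- `N_i(π)`: the number of `i`-marked parts of `π`. -/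
def Nmk (π : Partition) (i : ℕ) : ℕ := (row π i).length

/-- `π^{(i)}_j` as a natural number (meaningful for `1 ≤ j ≤ N_i(π)`;
junk value `0` otherwise). -/
def nth (π : Partition) (i j : ℕ) : ℕ := (row π i).getD (j - 1) 0

/-- The canonical embedding of the natural numbers into `EReal`. -/
noncomputable def natE (n : ℕ) : EReal := ((n : ℝ) : EReal)

/-- `π^{(i)}_j` as an extended real, with the conventions `π^{(i)}_0 = +∞`
and `π^{(i)}_j = -∞` for `j > N_i(π)`. -/
noncomputable def rowVal (π : Partition) (i j : ℕ) : EReal :=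
  if j = 0 then ⊤
  else
    match (row π i)[j - 1]? with
    | some x => natE x
    | none => ⊥

/-- The largest `l ≥ 0` such that there is no odd part of `π` greater than or
equal to `π^{(2)}_l` (the indices `1 ≤ j ≤ N₂(π)` with this property form an
initial segment, so this is also their number). -/
def bigL (π : Partition) : ℕ :=
  ((List.range' 1 (Nmk π 2)).filter fun j =>
    decide (∀ x ∈ π.parts, x % 2 = 1 → x < nth π 2 j)).length

/-- `startPair π b = (starting type of π^{(2)}_b, s_b(π))` for `1 ≤ b ≤ N₂(π)`.
Starting types are encoded by integers: `-1` stands for `s₋₁`, and `0,1,2,3`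
for `s₀,s₁,s₂,s₃`; the value `9` is a junk value used when no case applies. -/
def startPair (π : Partition) : ℕ → ℤ × ℕ
  | 0 => (9, 0)
  | b + 1 =>
    let v := nth π 2 (b + 1)
    if bigL π < b + 1 then (-1, 0)
    else
      let okLow : Bool :=
        if b = 0 then !decide ((v + 2) ∈ π.parts)
        else !decide (Marked π (v + 2) 1) || decide ((startPair π b).2 = v + 2)
      let ok2 : Bool :=
        if b = 0 then decide (Marked π (v + 2) 1)
        else decide (Marked π (v + 2) 1) && !decide ((startPair π b).2 = v + 2)
      if decide (Marked π (v - 1) 1) && okLow then (0, v - 1)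
      else if decide (Marked π (v - 2) 1) && okLow then (1, v - 2)
      else if ok2 then (2, v + 2)
      else if decide (Marked π v 1) then (3, v)
      else (9, 0)

/-- The starting type of `π^{(2)}_b`, encoded as an integer. -/
def startType (π : Partition) (b : ℕ) : ℤ := (startPair π b).1

/-- The set `C(k,r)`: partitions with no repeated odd part, in which the parts
equal to `1` and `2` have marks at most `r - 1`, and whose Göllnitz–Gordon
marking has at most `k - 1` rows. -/
def C (k r : ℕ) : Set Partition :=
  { π | (∀ x, x % 2 = 1 → π.parts.count x ≤ 1) ∧
        (∀ x m, Marked π x m → x ≤ 2 → m ≤ r - 1) ∧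
        (∀ x m, Marked π x m → m ≤ k - 1) }

/-- The set `C_<(k,r|p,t)`. -/
noncomputable def Clt (k r p t : ℕ) : Set Partition :=
  { π | π ∈ C k r ∧
        (∀ x ∈ π.parts, x % 2 = 1 → x < 2 * t + 1) ∧
        rowVal π 2 (p + 1) < natE (2 * t + 1) ∧
        natE (2 * t + 1) < rowVal π 2 p ∧
        (rowVal π 2 p = natE (2 * t + 2) →
          startType π p = 2 ∨ startType π p = 3) ∧
        (rowVal π 2 (p + 1) = natE (2 * t) →
          startType π (p + 1) = 0 ∨ startType π (p + 1) = 1) }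

/-- The set `C_=(k,r|p,t)`. -/
noncomputable def Ceq (k r p t : ℕ) : Set Partition :=
  { π | π ∈ C k r ∧
        (2 * t + 1) ∈ π.parts ∧
        (∀ x ∈ π.parts, x % 2 = 1 → x ≤ 2 * t + 1) ∧
        (∀ m, Marked π (2 * t + 1) m → m ≤ 2) ∧
        natE (2 * t + 2) ≤ rowVal π 2 p ∧
        rowVal π 2 (p + 1) ≤ natE (2 * t + 2) ∧
        ((∃ j, 1 ≤ j ∧ j ≤ Nmk π 2 ∧ nth π 2 j = 2 * t + 2 ∧ startType π j = 0) →
          rowVal π 2 (p + 1) = natE (2 * t + 2) ∧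
          ∃ i, 1 ≤ i ∧ i ≤ p + 1 ∧
            nth π 2 i = 2 * t + 2 + 4 * (p + 1 - i) ∧
            π.parts.count (2 * t + 2 + 4 * (p + 1 - i)) = 1) ∧
        ((∃ j, 1 ≤ j ∧ j ≤ Nmk π 2 ∧ nth π 2 j = 2 * t + 2 ∧ startType π j = 2) →
          rowVal π 2 p = natE (2 * t + 2)) ∧
        ((2 * t + 2) ∈ π.parts → ¬ Marked π (2 * t + 2) 2 →
          rowVal π 2 p = natE (2 * t + 4) ∧ startType π p = 3 ∧
          ∃ i, 1 ≤ i ∧ i ≤ p ∧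
            nth π 2 i = 2 * t + 4 + 4 * (p - i) ∧
            (2 * t + 4 + 4 * (p - i) + 2) ∉ π.parts) }

/-- The first starting cluster index `p₁` of `π` (with `p₀ = p + 1`): the least
`j ≥ 1` such that `π^{(2)}_j = π^{(2)}_p + 4(p - j)` and all of
`π^{(2)}_j, …, π^{(2)}_p` have the same starting type as `π^{(2)}_p`. -/
def firstCluster (π : Partition) (p : ℕ) : ℕ :=
  ((List.range' 1 p).filter fun j =>
    (List.range' j (p + 1 - j)).all fun i =>
      decide (nth π 2 i = nth π 2 p + 4 * (p - i)) &&
      decide (startType π i = startType π p)).headD p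

/-- The set `ℰ(k,r)` of partitions in `C(k,r)` with no odd parts. -/
def E (k r : ℕ) : Set Partition :=
  { π | π ∈ C k r ∧ ∀ x ∈ π.parts, x % 2 = 0 }

/-- `C_<(k,r|m) = ⋃_{p+t=m} C_<(k,r|p,t)`. -/
noncomputable def Cltm (k r m : ℕ) : Set Partition :=
  { π | ∃ p t, p + t = m ∧ π ∈ Clt k r p t }

/-- `C_=(k,r|m) = ⋃_{p+t=m} C_=(k,r|p,t)`. -/
noncomputable def Ceqm (k r m : ℕ) : Set Partition :=
  { π | ∃ p t, p + t = m ∧ π ∈ Ceq k r p t }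

/-- `I_N`: partitions into distinct odd parts, each at least `2N + 1`. -/
def Iset (N : ℕ) : Set Partition :=
  { ζ | (∀ x ∈ ζ.parts, x % 2 = 1 ∧ 2 * N + 1 ≤ x) ∧ ζ.parts.Nodup }

/-- `F(3,3)`: pairs `(π, ζ)` with `π ∈ ℰ(3,3)` and `ζ ∈ I_{N₂(π)}`. -/
noncomputable def F33 : Set (Partition × Partition) :=
  { pq | pq.1 ∈ E 3 3 ∧ pq.2 ∈ Iset (Nmk pq.1 2) }

/-!
No odd part exceeds `2t+1 < 2t+2 = π^{(2)}_{p+1}`, so `π^{(2)}_1, …, π^{(2)}_{p+1}` are even and,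
being pairwise non-conflicting, at least `4` apart: `π^{(2)}_j ≥ π^{(2)}_{p+1} + 4(p+1-j)`, and
once equality holds (`π^{(2)}_j` is on the line) it persists down to `p+1`. Around such an even
2-marked part `v > 2t+2` the odd neighbours `v ± 1` are absent, so only `v - 2`, `v` and `v + 2`
can carry the 1-marked companions that decide the starting type.

An `s₂` start at `v` on the line makes `v + 2`, hence (by conflict) `v - 2`, the 1-marked
neighbours, and `v - 2 = π^{(2)}_{j+1} + 2` turns the next part on the line into an `s₂` start as
well; so no `s₂` start sits above `s`. A part `v` above `s` on the line is then neither `s₂` nor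
(by minimality) `s₀`/`s₁`, so `v + 2` is not 1-marked and a 1-marked `v - 2` would make it `s₁`:
its 1-marked companion is `v` itself, i.e. it is `s₃`. Finally `π^{(2)}_s + 2` is not 1-marked
(the `s₀`/`s₁` condition, the start above `s` not being an `s₁` ending there), and any larger
mark would need a conflicting 1-marked part among `v`, `v + 1`, `v + 2`.
-/

theorem _root_.List.Pairwise.rel_or_rel_of_ne {α : Type*} {R : α → α → Prop} {l : List α}
    (hl : l.Pairwise R) {a b : α} (ha : a ∈ l) (hb : b ∈ l) (hab : a ≠ b) : R a b ∨ R b a := by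
  obtain ⟨s, u, rfl⟩ := List.mem_iff_append.1 ha
  rw [List.pairwise_append, List.pairwise_cons] at hl
  rcases List.mem_append.1 hb with hb | hb
  · exact Or.inr (hl.2.2 b hb a List.mem_cons_self)
  · rcases List.mem_cons.1 hb with rfl | hb
    · exact absurd rfl hab
    · exact Or.inl (hl.2.1.1 b hb)

lemma mex1_pos (s : List ℕ) : 0 < mex1 s := (Nat.find_spec (exists_pos_not_mem s)).1

lemma mex1_not_mem (s : List ℕ) : mex1 s ∉ s := (Nat.find_spec (exists_pos_not_mem s)).2

lemma mem_of_lt_mex1 {s : List ℕ} {n : ℕ} (hn : 0 < n) (h : n < mex1 s) : n ∈ s := by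
  by_contra hns
  exact absurd (Nat.find_min' (exists_pos_not_mem s) ⟨hn, hns⟩) (not_le.2 h)

lemma sub_le_two_of_conflict {x y : ℕ} (h : conflict x y = true) : x - y ≤ 2 := by
  unfold conflict at h; split at h <;> simp at h <;> omega

lemma conflict_of_sub_le_one {x y : ℕ} (h : x - y ≤ 1) : conflict x y = true := by
  unfold conflict; split <;> simp <;> omega

lemma conflict_of_even {x y : ℕ} (hx : x % 2 = 0) (h : x - y ≤ 2) : conflict x y = true := by
  unfold conflict; split <;> simp <;> omega

lemma add_three_le_of_not_conflict {x y : ℕ} (hx : x % 2 = 0) (h : conflict x y = false) :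
    y + 3 ≤ x := by
  unfold conflict at h; rw [if_neg (by omega)] at h; simp at h; omega

def GreedyMarked (l : List (ℕ × ℕ)) : Prop :=
  ∀ A q B, l = A ++ q :: B → q.2 = mex1 ((B.filter fun r => conflict q.1 r.1).map Prod.snd)

lemma greedyMarked_ggAux :
    ∀ (rest : List ℕ) (acc : List (ℕ × ℕ)), GreedyMarked acc → GreedyMarked (ggAux acc rest)
  | [], _, h => h
  | p :: rest, acc, h => by
      refine greedyMarked_ggAux rest _ fun A q B hA => ?_
      rcases List.cons_eq_append_iff.1 hA with ⟨-, hq⟩ | ⟨A', -, hacc⟩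
      · obtain ⟨rfl, rfl⟩ := List.cons_eq_cons.1 hq
        rfl
      · exact h A' q B hacc

lemma ggAux_map_fst : ∀ (rest : List ℕ) (acc : List (ℕ × ℕ)),
    (ggAux acc rest).map Prod.fst = rest.reverse ++ acc.map Prod.fst
  | [], _ => by simp [ggAux]
  | p :: rest, acc => by simp [ggAux, ggAux_map_fst rest]

lemma GreedyMarked.pairwise : ∀ {l : List (ℕ × ℕ)}, GreedyMarked l →
    l.Pairwise fun q r => conflict q.1 r.1 = true → q.2 ≠ r.2
  | [], _ => List.Pairwise.nil
  | q :: B, h => by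
    refine List.Pairwise.cons (fun r hr hc hqr => ?_) (GreedyMarked.pairwise fun A q' B' hB =>
      h (q :: A) q' B' (by rw [hB]; rfl))
    have hmem : q.2 ∈ (B.filter fun r => conflict q.1 r.1).map Prod.snd :=
      List.mem_map.2 ⟨r, List.mem_filter.2 ⟨hr, hc⟩, hqr.symm⟩
    rw [h [] q B rfl] at hmem
    exact mex1_not_mem _ hmem

section Marking

variable {π : Partition}

lemma ggMarks_map_fst (π : Partition) : (ggMarks π).map Prod.fst = π.parts := by
  simp [ggMarks, ggAux_map_fst]

lemma greedyMarked_ggMarks (π : Partition) : GreedyMarked (ggMarks π) :=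
  greedyMarked_ggAux _ _ fun A q B h => by simp at h

lemma ggMarks_pairwise (π : Partition) :
    (ggMarks π).Pairwise fun q r => r.1 ≤ q.1 ∧ (conflict q.1 r.1 = true → q.2 ≠ r.2) := by
  have hs := π.sorted
  rw [← ggMarks_map_fst, List.pairwise_map] at hs
  exact hs.and (greedyMarked_ggMarks π).pairwise

lemma Marked.mem_parts {x m : ℕ} (h : Marked π x m) : x ∈ π.parts := by
  rw [← ggMarks_map_fst]; exact List.mem_map_of_mem h

lemma exists_marked_of_mem {x : ℕ} (h : x ∈ π.parts) : ∃ m, Marked π x m := by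
  rw [← ggMarks_map_fst] at h
  obtain ⟨⟨y, m⟩, hq, rfl⟩ := List.mem_map.1 h
  exact ⟨m, hq⟩

lemma Marked.one_le {x m : ℕ} (h : Marked π x m) : 1 ≤ m := by
  obtain ⟨A, B, hAB⟩ := List.mem_iff_append.1 h
  have hmex : m = _ := greedyMarked_ggMarks π A _ B hAB
  exact hmex ▸ mex1_pos _

lemma Marked.exists_conflict {x m : ℕ} (h : Marked π x m) {m' : ℕ} (h1 : 1 ≤ m') (hm : m' < m) :
    ∃ y ≤ x, conflict x y = true ∧ Marked π y m' := by
  obtain ⟨A, B, hAB⟩ := List.mem_iff_append.1 h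
  have hmex : m = _ := greedyMarked_ggMarks π A _ B hAB
  obtain ⟨r, hr, hr2⟩ := List.mem_map.1 (mem_of_lt_mex1 h1 (hmex ▸ hm))
  obtain ⟨hrB, hrc⟩ := List.mem_filter.1 hr
  have hpw := ggMarks_pairwise π
  rw [hAB, List.pairwise_append, List.pairwise_cons] at hpw
  refine ⟨r.1, (hpw.2.1.1 r hrB).1, hrc, ?_⟩
  rw [Marked, hAB, ← hr2]
  exact List.mem_append_right _ (List.mem_cons_of_mem _ hrB)

lemma mem_row_iff {x i : ℕ} : x ∈ row π i ↔ Marked π x i := by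
  simp [row, Marked]

lemma row_pairwise (π : Partition) (i : ℕ) :
    (row π i).Pairwise fun x y => y ≤ x ∧ conflict x y = false := by
  unfold row
  rw [List.pairwise_map]
  refine List.Pairwise.imp_of_mem (fun ha hb hab => ?_) ((ggMarks_pairwise π).filter _)
  simp only [List.mem_filter, beq_iff_eq] at ha hb
  exact ⟨hab.1, Bool.eq_false_iff.2 fun hc => hab.2 hc (ha.2.trans hb.2.symm)⟩

lemma Marked.not_conflict {x y m : ℕ} (hx : Marked π x m) (hy : Marked π y m) (hyx : y < x) :
    conflict x y = false := by
  rcases (row_pairwise π m).rel_or_rel_of_ne (mem_row_iff.2 hx) (mem_row_iff.2 hy) hyx.ne' with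
    h | h
  · exact h.2
  · omega

lemma Marked.not_marked_of_lt_of_even {x y m : ℕ} (hy : Marked π y m) (hyx : y < x)
    (hx : x % 2 = 0) (h2 : x - y ≤ 2) : ¬ Marked π x m := fun hxm => by
  simpa [conflict_of_even hx h2] using hxm.not_conflict hy hyx

end Marking

section Rows

variable {π : Partition}

lemma nth_eq_getElem {i j : ℕ} (hj : j - 1 < Nmk π i) : nth π i j = (row π i)[j - 1] :=
  List.getD_eq_getElem _ _ hj

lemma nth_eq_zero {i j : ℕ} (hj : Nmk π i < j) : nth π i j = 0 :=
  List.getD_eq_default _ _ (by unfold Nmk at hj; omega)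

lemma marked_nth {i j : ℕ} (h1 : 1 ≤ j) (hj : j ≤ Nmk π i) : Marked π (nth π i j) i := by
  rw [nth_eq_getElem (by omega), ← mem_row_iff]
  exact List.getElem_mem _

lemma nth_le_and_not_conflict {i a b : ℕ} (ha : 1 ≤ a) (hab : a < b) (hb : b ≤ Nmk π i) :
    nth π i b ≤ nth π i a ∧ conflict (nth π i a) (nth π i b) = false := by
  rw [nth_eq_getElem (by omega), nth_eq_getElem (by omega)]
  exact List.pairwise_iff_getElem.1 (row_pairwise π i) _ _ _ _ (by omega)

lemma nth_lt_nth {i a b : ℕ} (ha : 1 ≤ a) (hab : a < b) (haN : a ≤ Nmk π i) :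
    nth π i b < nth π i a := by
  by_cases hb : b ≤ Nmk π i
  · obtain ⟨hle, hc⟩ := nth_le_and_not_conflict ha hab hb
    refine lt_of_le_of_ne hle fun heq => ?_
    rw [heq, conflict_of_sub_le_one (by omega)] at hc
    exact Bool.noConfusion hc
  · rw [nth_eq_zero (by omega)]
    exact π.pos _ (marked_nth ha haN).mem_parts

lemma le_Nmk_and_nth_eq_of_rowVal_eq {i j x : ℕ} (hj : j ≠ 0) (h : rowVal π i j = natE x) :
    j ≤ Nmk π i ∧ nth π i j = x := by
  unfold rowVal at h
  rw [if_neg hj] at h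
  split at h
  next y hy =>
    obtain ⟨hlt, hy⟩ := List.getElem?_eq_some_iff.1 hy
    have hyx : y = x := by exact_mod_cast (EReal.coe_eq_coe_iff.1 h : (y : ℝ) = x)
    exact ⟨by unfold Nmk; omega, by rw [nth_eq_getElem hlt, hy, hyx]⟩
  next => exact absurd h.symm (EReal.coe_ne_bot _)

lemma le_bigL {n : ℕ} (hn : n ≤ Nmk π 2)
    (h : ∀ j, 1 ≤ j → j ≤ n → ∀ x ∈ π.parts, x % 2 = 1 → x < nth π 2 j) : n ≤ bigL π := by
  have hsplit :
      List.range' 1 (Nmk π 2) = List.range' 1 n ++ List.range' (1 + n) (Nmk π 2 - n) := by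
    rw [List.range'_append_1, Nat.add_sub_cancel' hn]
  rw [bigL, hsplit, List.filter_append, List.length_append,
    List.filter_eq_self.2 fun j hj => by
      simpa using h j (by simp at hj; omega) (by simp at hj; omega)]
  simp

end Rows

section StartingTypes

variable {π : Partition}

/-- The conditions `okLow` and `ok2` in the definition of `startPair`, as propositions. -/
def OkLow (π : Partition) : ℕ → Prop
  | 0 => nth π 2 1 + 2 ∉ π.parts
  | b + 1 =>
    ¬ Marked π (nth π 2 (b + 1 + 1) + 2) 1 ∨ (startPair π (b + 1)).2 = nth π 2 (b + 1 + 1) + 2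

def Ok2 (π : Partition) : ℕ → Prop
  | 0 => Marked π (nth π 2 1 + 2) 1
  | b + 1 =>
    Marked π (nth π 2 (b + 1 + 1) + 2) 1 ∧ (startPair π (b + 1)).2 ≠ nth π 2 (b + 1 + 1) + 2

open Classical in
lemma startPair_succ {b : ℕ} (hb : b + 1 ≤ bigL π) :
    startPair π (b + 1) =
      if Marked π (nth π 2 (b + 1) - 1) 1 ∧ OkLow π b then (0, nth π 2 (b + 1) - 1)
      else if Marked π (nth π 2 (b + 1) - 2) 1 ∧ OkLow π b then (1, nth π 2 (b + 1) - 2)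
      else if Ok2 π b then (2, nth π 2 (b + 1) + 2)
      else if Marked π (nth π 2 (b + 1)) 1 then (3, nth π 2 (b + 1))
      else (9, 0) := by
  rw [startPair, if_neg (by omega)]
  cases b
  · simp [OkLow, Ok2]
  · simp [OkLow, Ok2]
    congr

lemma startType_succ_eq_zero_or_one_iff {b : ℕ} (hb : b + 1 ≤ bigL π) :
    (startType π (b + 1) = 0 ∨ startType π (b + 1) = 1) ↔
      OkLow π b ∧ (Marked π (nth π 2 (b + 1) - 1) 1 ∨ Marked π (nth π 2 (b + 1) - 2) 1) := by
  rw [startType, startPair_succ hb]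
  split_ifs <;> simp_all <;> tauto

lemma startPair_succ_of_startType_eq_two {b : ℕ} (hb : b + 1 ≤ bigL π)
    (h : startType π (b + 1) = 2) : startPair π (b + 1) = (2, nth π 2 (b + 1) + 2) ∧ Ok2 π b := by
  rw [startType, startPair_succ hb] at h
  rw [startPair_succ hb]
  split_ifs at h ⊢ <;> simp_all

lemma startType_succ_eq_two {b : ℕ} (hb : b + 1 ≤ bigL π) (h2 : Ok2 π b) (hlow : ¬ OkLow π b) :
    startType π (b + 1) = 2 := by
  rw [startType, startPair_succ hb]
  simp [hlow, h2]

lemma startType_succ_eq_two_or_three {b : ℕ} (hb : b + 1 ≤ bigL π)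
    (h0 : Marked π (nth π 2 (b + 1)) 1) (h1 : ¬ Marked π (nth π 2 (b + 1) - 1) 1)
    (h2 : ¬ Marked π (nth π 2 (b + 1) - 2) 1) :
    startType π (b + 1) = 2 ∨ startType π (b + 1) = 3 := by
  rw [startType, startPair_succ hb]
  split_ifs <;> simp_all

lemma startPair_succ_snd {b : ℕ} (hb : b + 1 ≤ bigL π) :
    (startPair π (b + 1)).2 = 0 ∨
    ((startPair π (b + 1)).2 = nth π 2 (b + 1) - 1 ∧ Marked π (nth π 2 (b + 1) - 1) 1) ∨
    ((startPair π (b + 1)).2 = nth π 2 (b + 1) - 2 ∧ startType π (b + 1) = 1) ∨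
    (startPair π (b + 1)).2 = nth π 2 (b + 1) + 2 ∨
    (startPair π (b + 1)).2 = nth π 2 (b + 1) := by
  rw [startType, startPair_succ hb]
  split_ifs <;> simp_all

lemma Ok2.marked {b : ℕ} (h : Ok2 π b) : Marked π (nth π 2 (b + 1) + 2) 1 := by
  cases b
  · exact h
  · exact h.1

end StartingTypes

section OddPartsBelow

variable {π : Partition} {t : ℕ}

lemma mod_two_eq_zero_of_mem (hodd : ∀ x ∈ π.parts, x % 2 = 1 → x ≤ 2 * t + 1) {x : ℕ}
    (hx : x ∈ π.parts) (hlt : 2 * t + 1 < x) : x % 2 = 0 := by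
  by_contra hx2
  have := hodd x hx (by omega)
  omega

lemma not_mem_add_two (hodd : ∀ x ∈ π.parts, x % 2 = 1 → x ≤ 2 * t + 1) {v : ℕ}
    (hv : 2 * t + 2 ≤ v) (heven : v % 2 = 0) (h0 : ¬ Marked π v 1)
    (h2 : ¬ Marked π (v + 2) 1) : v + 2 ∉ π.parts := by
  intro hmem
  obtain ⟨m, hm⟩ := exists_marked_of_mem hmem
  have hm1 : m ≠ 1 := by rintro rfl; exact h2 hm
  obtain ⟨y, hyv, hc, hy⟩ := hm.exists_conflict le_rfl (by have := hm.one_le; omega)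
  have := sub_le_two_of_conflict hc
  obtain rfl | rfl | rfl : y = v ∨ y = v + 1 ∨ y = v + 2 := by omega
  · exact h0 hy
  · have := hodd _ hy.mem_parts (by omega)
    omega
  · exact h2 hy

lemma marked_sub_two_or_self (hodd : ∀ x ∈ π.parts, x % 2 = 1 → x ≤ 2 * t + 1) {v : ℕ}
    (hv2 : Marked π v 2) (hv : 2 * t + 3 ≤ v) (heven : v % 2 = 0) :
    Marked π (v - 2) 1 ∨ Marked π v 1 := by
  obtain ⟨y, hyv, hc, hy⟩ := hv2.exists_conflict le_rfl one_lt_two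
  have := sub_le_two_of_conflict hc
  obtain rfl | rfl | rfl : y = v - 2 ∨ y = v - 1 ∨ y = v := by omega
  · exact Or.inl hy
  · have := hodd _ hy.mem_parts (by omega)
    omega
  · exact Or.inr hy

end OddPartsBelow

structure AboveOddParts (π : Partition) (t N : ℕ) : Prop where
  odd_le : ∀ x ∈ π.parts, x % 2 = 1 → x ≤ 2 * t + 1
  le_Nmk : N ≤ Nmk π 2
  nth_eq : nth π 2 N = 2 * t + 2

namespace AboveOddParts

variable {π : Partition} {t N : ℕ}

lemma nth_ge (h : AboveOddParts π t N) {j : ℕ} (hj : 1 ≤ j) (hjN : j ≤ N) :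
    2 * t + 2 ≤ nth π 2 j := by
  rcases hjN.lt_or_eq with hlt | rfl
  · exact h.nth_eq ▸ (nth_lt_nth hj hlt (by have := h.le_Nmk; omega)).le
  · exact h.nth_eq.ge

lemma nth_mod_two (h : AboveOddParts π t N) {j : ℕ} (hj : 1 ≤ j) (hjN : j ≤ N) :
    nth π 2 j % 2 = 0 :=
  mod_two_eq_zero_of_mem h.odd_le (marked_nth hj (hjN.trans h.le_Nmk)).mem_parts
    (by have := h.nth_ge hj hjN; omega)

lemma nth_succ_add_four_le (h : AboveOddParts π t N) {j : ℕ} (hj : 1 ≤ j) (hjN : j < N) :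
    nth π 2 (j + 1) + 4 ≤ nth π 2 j := by
  have hc := (nth_le_and_not_conflict (π := π) (i := 2) hj (by omega : j < j + 1)
    (by have := h.le_Nmk; omega)).2
  have := add_three_le_of_not_conflict (h.nth_mod_two hj hjN.le) hc
  have := h.nth_mod_two (by omega : 1 ≤ j + 1) hjN
  have := h.nth_mod_two hj hjN.le
  omega

lemma nth_add_four_mul_le (h : AboveOddParts π t N) {i j : ℕ} (hi : 1 ≤ i) (hij : i ≤ j)
    (hjN : j ≤ N) : nth π 2 j + 4 * (j - i) ≤ nth π 2 i := by
  induction j, hij using Nat.le_induction with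
  | base => simp
  | succ j hij ih =>
    have := h.nth_succ_add_four_le (hi.trans hij) hjN
    have := ih (by omega)
    omega

lemma nth_eq_of_le (h : AboveOddParts π t N) {i j : ℕ} (hi : 1 ≤ i) (hij : i ≤ j) (hjN : j ≤ N)
    (hline : nth π 2 i = nth π 2 N + 4 * (N - i)) : nth π 2 j = nth π 2 N + 4 * (N - j) := by
  have := h.nth_add_four_mul_le hi hij hjN
  have := h.nth_add_four_mul_le (hi.trans hij) hjN le_rfl
  omega

lemma le_bigL (h : AboveOddParts π t N) : N ≤ bigL π :=
  Bressoud.le_bigL h.le_Nmk fun _ hj hjN x hx hxodd => by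
    have := h.odd_le x hx hxodd
    have := h.nth_ge hj hjN
    omega

lemma startType_eq_one_of_snd_eq (h : AboveOddParts π t N) {b : ℕ} (hb : 1 ≤ b) (hbN : b < N)
    (hsnd : (startPair π b).2 = nth π 2 (b + 1) + 2) :
    startType π b = 1 ∧ nth π 2 b = nth π 2 (b + 1) + 4 := by
  obtain ⟨c, rfl⟩ : ∃ c, b = c + 1 := ⟨b - 1, by omega⟩
  have hgap := h.nth_succ_add_four_le hb hbN
  have heven := h.nth_mod_two hb hbN.le
  rcases startPair_succ_snd (by have := h.le_bigL; omega : c + 1 ≤ bigL π) with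
    hzero | ⟨hsub_one, hm⟩ | ⟨hsub_two, htype⟩ | hadd_two | hself
  · omega
  · have := h.odd_le _ hm.mem_parts (by omega)
    have := h.nth_ge (by omega : 1 ≤ c + 1 + 1) hbN
    omega
  · exact ⟨htype, by omega⟩
  · omega
  · omega

lemma startType_succ_eq_two_of_marked (h : AboveOddParts π t N) {b : ℕ} (hbN : b + 1 ≤ N)
    (hv2 : Marked π (nth π 2 (b + 1) + 2) 1)
    (hprev : 1 ≤ b → nth π 2 b = nth π 2 (b + 1) + 4 → startType π b ≠ 1) :
    startType π (b + 1) = 2 := by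
  refine startType_succ_eq_two (h.le_bigL.trans' hbN) ?_ ?_
  · cases b
    · exact hv2
    · exact ⟨hv2, fun hsnd => by
        obtain ⟨h1, h4⟩ := h.startType_eq_one_of_snd_eq (by omega) (by omega) hsnd
        exact hprev (by omega) h4 h1⟩
  · cases b
    · exact not_not.2 hv2.mem_parts
    · rintro (hn | hsnd)
      · exact hn hv2
      · obtain ⟨h1, h4⟩ := h.startType_eq_one_of_snd_eq (by omega) (by omega) hsnd
        exact hprev (by omega) h4 h1

lemma okLow_of_not_marked (h : AboveOddParts π t N) {b : ℕ} (hbN : b + 1 ≤ N)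
    (h0 : ¬ Marked π (nth π 2 (b + 1)) 1) (h2 : ¬ Marked π (nth π 2 (b + 1) + 2) 1) :
    OkLow π b := by
  cases b
  · exact not_mem_add_two h.odd_le (h.nth_ge le_rfl hbN) (h.nth_mod_two le_rfl hbN) h0 h2
  · exact Or.inl h2

lemma not_mem_nth_add_two_of_startType (h : AboveOddParts π t N) {b : ℕ} (hbN : b + 1 ≤ N)
    (h01 : startType π (b + 1) = 0 ∨ startType π (b + 1) = 1)
    (hprev : 1 ≤ b → nth π 2 b = nth π 2 (b + 1) + 4 → startType π b ≠ 1) :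
    nth π 2 (b + 1) + 2 ∉ π.parts := by
  obtain ⟨hlow, hsub⟩ := (startType_succ_eq_zero_or_one_iff (h.le_bigL.trans' hbN)).1 h01
  have hv := h.nth_ge (by omega) hbN
  have heven := h.nth_mod_two (by omega) hbN
  have h0 : ¬ Marked π (nth π 2 (b + 1)) 1 := by
    rcases hsub with hsub | hsub <;>
      exact hsub.not_marked_of_lt_of_even (by omega) heven (by omega)
  cases b
  · exact hlow
  · refine not_mem_add_two h.odd_le hv heven h0 ?_
    rcases hlow with hn | hsnd
    · exact hn
    · obtain ⟨h1, h4⟩ := h.startType_eq_one_of_snd_eq (by omega) (by omega) hsnd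
      exact absurd h1 (hprev (by omega) h4)

lemma startType_succ_eq_two_of_eq_two (h : AboveOddParts π t N) {j : ℕ} (hj : 1 ≤ j)
    (hjN : j < N) (hline : nth π 2 j = nth π 2 (j + 1) + 4) (h2 : startType π j = 2) :
    startType π (j + 1) = 2 := by
  obtain ⟨c, rfl⟩ : ∃ c, j = c + 1 := ⟨j - 1, by omega⟩
  have hv2 := (startPair_succ_of_startType_eq_two (h.le_bigL.trans' hjN.le) h2).2.marked
  have hv := h.nth_ge (by omega : 1 ≤ c + 1 + 1) hjN
  have heven := h.nth_mod_two hj hjN.le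
  have hsub : Marked π (nth π 2 (c + 1) - 2) 1 := by
    refine (marked_sub_two_or_self h.odd_le (marked_nth hj (by have := h.le_Nmk; omega))
      (by omega) heven).resolve_right fun hself => ?_
    exact hself.not_marked_of_lt_of_even (by omega) (by omega) (by omega) hv2
  rw [hline, show nth π 2 (c + 1 + 1) + 4 - 2 = nth π 2 (c + 1 + 1) + 2 by omega] at hsub
  refine h.startType_succ_eq_two_of_marked hjN hsub ?_
  exact fun _ _ => by rw [h2]; decide

lemma startType_eq_two_of_le (h : AboveOddParts π t N) {i j : ℕ} (hi : 1 ≤ i) (hij : i ≤ j)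
    (hjN : j ≤ N) (hline : nth π 2 i = nth π 2 N + 4 * (N - i)) (h2 : startType π i = 2) :
    startType π j = 2 := by
  induction j, hij using Nat.le_induction with
  | base => exact h2
  | succ j hij ih =>
    have hj := h.nth_eq_of_le hi hij (by omega) hline
    have hj1 := h.nth_eq_of_le hi (by omega : i ≤ j + 1) hjN hline
    exact h.startType_succ_eq_two_of_eq_two (hi.trans hij) (by omega) (by omega) (ih (by omega))

lemma startType_eq_three (h : AboveOddParts π t N) {b : ℕ} (hbN : b + 1 < N)
    (h01 : ¬ (startType π (b + 1) = 0 ∨ startType π (b + 1) = 1))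
    (h2 : startType π (b + 1) ≠ 2)
    (hprev : 1 ≤ b → nth π 2 b = nth π 2 (b + 1) + 4 → startType π b ≠ 1) :
    startType π (b + 1) = 3 := by
  have hbL : b + 1 ≤ bigL π := h.le_bigL.trans' hbN.le
  have hv := h.nth_succ_add_four_le (by omega) hbN
  have hvN := h.nth_ge (by omega : 1 ≤ b + 1 + 1) hbN
  have heven := h.nth_mod_two (by omega) hbN.le
  have hv2 : ¬ Marked π (nth π 2 (b + 1) + 2) 1 := fun hv2 =>
    h2 (h.startType_succ_eq_two_of_marked hbN.le hv2 hprev)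
  rcases marked_sub_two_or_self h.odd_le (marked_nth (by omega) (by have := h.le_Nmk; omega))
    (by omega) heven with hsub | hself
  · have h0 : ¬ Marked π (nth π 2 (b + 1)) 1 :=
      hsub.not_marked_of_lt_of_even (by omega) heven (by omega)
    exact absurd ((startType_succ_eq_zero_or_one_iff hbL).2
      ⟨h.okLow_of_not_marked hbN.le h0 hv2, Or.inr hsub⟩) h01
  · have hodd : ¬ Marked π (nth π 2 (b + 1) - 1) 1 := fun hm => by
      have := h.odd_le _ hm.mem_parts (by omega)
      omega
    have hsub : ¬ Marked π (nth π 2 (b + 1) - 2) 1 := fun hsub =>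
      hsub.not_marked_of_lt_of_even (by omega) heven (by omega) hself
    exact (startType_succ_eq_two_or_three hbL hself hodd hsub).resolve_left h2

end AboveOddParts

theorem Ceq_smallest_cluster_general (k r p t s : ℕ)
    (π : Partition) (hπ : π ∈ Ceq k r p t)
    (hval : rowVal π 2 (p + 1) = natE (2 * t + 2))
    (hs1 : 1 ≤ s)
    (hsP : nth π 2 s = nth π 2 (p + 1) + 4 * (p + 1 - s) ∧
      (startType π s = 0 ∨ startType π s = 1))
    (hsmin : ∀ s', 1 ≤ s' → s' < s →
      ¬ (nth π 2 s' = nth π 2 (p + 1) + 4 * (p + 1 - s') ∧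
        (startType π s' = 0 ∨ startType π s' = 1))) :
    (nth π 2 s + 2) ∉ π.parts ∧
    ∀ i, 1 ≤ i → i < s → nth π 2 i = nth π 2 (p + 1) + 4 * (p + 1 - i) →
      startType π i = 3 := by
  obtain ⟨hN, hvN⟩ := le_Nmk_and_nth_eq_of_rowVal_eq p.succ_ne_zero hval
  have h : AboveOddParts π t (p + 1) := ⟨hπ.2.2.1, hN, hvN⟩
  have hsN : s ≤ p + 1 := by
    by_contra hlt
    have := nth_lt_nth (i := 2) (π := π) (by omega) (not_le.1 hlt) hN
    omega
  -- such a `b` lies on the line `π^{(2)}_{p+1} + 4(p+1-j)` too, so the minimality of `s` applies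
  have hprev : ∀ b, b + 1 ≤ s → nth π 2 (b + 1) = nth π 2 (p + 1) + 4 * (p + 1 - (b + 1)) →
      1 ≤ b → nth π 2 b = nth π 2 (b + 1) + 4 → startType π b ≠ 1 := fun b hbs hb1 hb hb4 h1 =>
    hsmin b hb (by omega) ⟨by omega, Or.inr h1⟩
  obtain ⟨b, rfl⟩ : ∃ b, s = b + 1 := ⟨s - 1, by omega⟩
  refine ⟨h.not_mem_nth_add_two_of_startType hsN hsP.2 (hprev b le_rfl hsP.1), ?_⟩
  intro i hi his hline
  obtain ⟨c, rfl⟩ : ∃ c, i = c + 1 := ⟨i - 1, by omega⟩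
  refine h.startType_eq_three (by omega) (hsmin _ hi his ⟨hline, ·⟩) (fun h2 => ?_)
    (hprev c his.le hline)
  have := h.startType_eq_two_of_le hi his.le hsN hline h2
  rcases hsP.2 with h0 | h1 <;> omega

/-- Lemma 2.13: let `π ∈ C_=(k,r|p,t)` with `π^{(2)}_{p+1} = 2t+2`, and let
`s` be the smallest integer with `π^{(2)}_s = π^{(2)}_{p+1} + 4(p-s+1)` of
starting type `s₀` or `s₁`. Then `π^{(2)}_s + 2` does not occur in `π`, and for
`i < s`, if `π^{(2)}_i = π^{(2)}_{p+1} + 4(p-i+1)` then `π^{(2)}_i` is of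
starting type `s₃`. -/
theorem Ceq_smallest_cluster (k r p t s : ℕ) (hrk : r ≤ k) (hr : 3 ≤ r)
    (π : Partition) (hπ : π ∈ Ceq k r p t)
    (hval : rowVal π 2 (p + 1) = natE (2 * t + 2))
    (hs1 : 1 ≤ s)
    (hsP : nth π 2 s = nth π 2 (p + 1) + 4 * (p + 1 - s) ∧
      (startType π s = 0 ∨ startType π s = 1))
    (hsmin : ∀ s', 1 ≤ s' → s' < s →
      ¬ (nth π 2 s' = nth π 2 (p + 1) + 4 * (p + 1 - s') ∧
        (startType π s' = 0 ∨ startType π s' = 1))) :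
    (nth π 2 s + 2) ∉ π.parts ∧
    ∀ i, 1 ≤ i → i < s → nth π 2 i = nth π 2 (p + 1) + 4 * (p + 1 - i) →
      startType π i = 3 :=
  Ceq_smallest_cluster_general k r p t s π hπ hval hs1 hsP hsmin

end Bressoud
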